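/- For every k ∈ ℕ and every integer i with 0 ≤ i < 2^k, the value v(i) is an integer multiple of 2^{-k}, and the map i ↦ v(i) is a bijection from {0, 1, ..., 2^k - 1} onto {0, 2^{-k}, 2·2^{-k}, ..., (2^k - 1)·2^{-k}}. -/

import Mathlib

/-!
Reading the first `k` binary digits of `i` in reverse order gives a `k`-bit number `bitRev k i`,
and for `i < 2 ^ k` the defining series of `vdc i` is the finite sum `bitRev k i / 2 ^ k`.
Bit reversal is injective on `{0, …, 2 ^ k - 1}` (the top bit of `bitRev k i` is the bottom
bit of `i`), hence a bijection of this finite set onto itself, and the theorem follows by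
composing with the scaling `m ↦ m / 2 ^ k`.
-/

/-- The van der Corput radical-inverse function: reverse the binary digits of `i`
across the radix point. -/
noncomputable def vdc (i : ℕ) : ℝ :=
  ∑' j : ℕ, if i.testBit j then ((2 : ℝ) ^ (j + 1))⁻¹ else 0

def bitRev : ℕ → ℕ → ℕ
  | 0, _ => 0
  | k + 1, i => i % 2 * 2 ^ k + bitRev k (i / 2)

lemma bitRev_lt_two_pow (k i : ℕ) : bitRev k i < 2 ^ k := by
  induction k generalizing i with
  | zero => simp [bitRev]
  | succ k ih =>
    have hbit : i % 2 * 2 ^ k ≤ 2 ^ k := mul_le_of_le_one_left (Nat.zero_le _) (by omega)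
    have := ih (i / 2)
    rw [bitRev, pow_succ]
    omega

lemma bitRev_succ_div_two_pow (k i : ℕ) : bitRev (k + 1) i / 2 ^ k = i % 2 := by
  rw [bitRev, Nat.add_comm, Nat.add_mul_div_right _ _ (Nat.two_pow_pos k),
    Nat.div_eq_of_lt (bitRev_lt_two_pow k _), zero_add]

lemma bitRev_succ_mod_two_pow (k i : ℕ) : bitRev (k + 1) i % 2 ^ k = bitRev k (i / 2) := by
  rw [bitRev, Nat.mul_add_mod_self_right, Nat.mod_eq_of_lt (bitRev_lt_two_pow k _)]

lemma bitRev_injOn (k : ℕ) : Set.InjOn (bitRev k) {i | i < 2 ^ k} := by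
  induction k with
  | zero => intro i hi i' hi' _; simp_all
  | succ k ih =>
    intro i (hi : i < 2 ^ (k + 1)) i' (hi' : i' < 2 ^ (k + 1)) h
    rw [pow_succ'] at hi hi'
    have hlow : i % 2 = i' % 2 := by
      rw [← bitRev_succ_div_two_pow, h, bitRev_succ_div_two_pow]
    have hhigh : i / 2 = i' / 2 := by
      refine ih (Nat.div_lt_of_lt_mul hi) (Nat.div_lt_of_lt_mul hi') ?_
      rw [← bitRev_succ_mod_two_pow, h, bitRev_succ_mod_two_pow]
    omega

lemma bitRev_bijOn (k : ℕ) : Set.BijOn (bitRev k) {i | i < 2 ^ k} {i | i < 2 ^ k} :=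
  (Set.finite_lt_nat _).injOn_iff_bijOn_of_mapsTo (fun i _ ↦ bitRev_lt_two_pow k i)
    |>.mp (bitRev_injOn k)

lemma sum_range_testBit_eq_bitRev (k i : ℕ) :
    ∑ j ∈ Finset.range k, (if i.testBit j then ((2 : ℝ) ^ (j + 1))⁻¹ else 0)
      = bitRev k i / 2 ^ k := by
  induction k generalizing i with
  | zero => simp [bitRev]
  | succ k ih =>
    have hshift : ∀ j, (if i.testBit (j + 1) then ((2 : ℝ) ^ (j + 1 + 1))⁻¹ else 0)
        = (if (i / 2).testBit j then ((2 : ℝ) ^ (j + 1))⁻¹ else 0) / 2 := by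
      intro j
      rw [Nat.testBit_div_two]
      split_ifs
      · ring
      · simp
    have hlow : (if i.testBit 0 then ((2 : ℝ) ^ (0 + 1))⁻¹ else 0) = (i % 2 : ℕ) / 2 := by
      rcases Nat.mod_two_eq_zero_or_one i with h | h <;> simp [Nat.testBit_zero, h]
    rw [Finset.sum_range_succ', Finset.sum_congr rfl fun j _ ↦ hshift j, ← Finset.sum_div, ih,
      hlow, bitRev]
    push_cast
    field_simp
    ring

lemma vdc_eq_bitRev_div {k i : ℕ} (hi : i < 2 ^ k) : vdc i = bitRev k i / 2 ^ k := by
  rw [vdc, tsum_eq_sum (s := Finset.range k), sum_range_testBit_eq_bitRev]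
  intro j hj
  have : i < 2 ^ j := hi.trans_le (Nat.pow_le_pow_right two_pos (by simpa using hj))
  simp [Nat.testBit_eq_false_of_lt this]

/-- For every `k`, each `v(i)` with `i < 2^k` is an integer multiple of `2^{-k}`, and
`i ↦ v(i)` is a bijection from `{0,…,2^k-1}` onto `{m·2^{-k} : 0 ≤ m < 2^k}`. -/
theorem vdc_bijOn (k : ℕ) :
    (∀ i < 2 ^ k, ∃ m : ℕ, vdc i = (m : ℝ) * ((2 : ℝ) ^ k)⁻¹) ∧
    Set.BijOn vdc {i : ℕ | i < 2 ^ k}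
      {x : ℝ | ∃ m : ℕ, m < 2 ^ k ∧ x = (m : ℝ) * ((2 : ℝ) ^ k)⁻¹} := by
  set scale : ℕ → ℝ := fun m ↦ m * ((2 : ℝ) ^ k)⁻¹
  have hvdc : Set.EqOn vdc (scale ∘ bitRev k) {i | i < 2 ^ k} :=
    fun i hi ↦ (vdc_eq_bitRev_div hi).trans (div_eq_mul_inv _ _)
  have hscale : Set.BijOn scale {m | m < 2 ^ k}
      {x : ℝ | ∃ m : ℕ, m < 2 ^ k ∧ x = (m : ℝ) * ((2 : ℝ) ^ k)⁻¹} := by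
    refine ⟨fun m hm ↦ ⟨m, hm, rfl⟩, fun m _ n _ h ↦ ?_, fun x ⟨m, hm, hx⟩ ↦ ⟨m, hm, hx.symm⟩⟩
    exact_mod_cast mul_right_cancel₀ (by positivity) h
  exact ⟨fun i hi ↦ ⟨bitRev k i, hvdc hi⟩, (hscale.comp (bitRev_bijOn k)).congr hvdc.symm⟩
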